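/- arXiv:1912.07339 — 3 statements merged into one kernel-verified Lean document; each statement's English description precedes it below -/
import Mathlib

section
/- Riesz representation theorem: for every set A, the assignment 𝓘 ↦ (U ↦ 𝓘(𝟙_U)) is an order isomorphism from the partial order of lower integrals on A onto the partial order of valuations on A, restricting to an order isomorphism between sub-probability lower integrals and sub-probability valuations. Its inverse sends a valuation μ to the lower integral f ↦ ⋁_{m,n≥1} (1/m) ∑_{i=1}^{mn} μ([f > i/m]). -/
/-- The initial σ-frame `𝕊`, as the least subset of the propositions `Ω = Prop`
containing `False` and `True` and closed under joins of increasing ω-chains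
(equivalently, the image of the free ω-cpo completion of `𝔹 = {⊥ ≤ ⊤}` in `Ω`). -/
inductive InS : Prop → Prop
  | bot : InS False
  | top : InS True
  | sup (c : ℕ → Prop) (mono : ∀ n, c n → c (n + 1)) (h : ∀ n, InS (c n)) :
      InS (∃ n, c n)

theorem InS.of_decidable (p : Prop) [Decidable p] : InS p := by
  by_cases h : p
  · rw [eq_true h]; exact InS.top
  · rw [eq_false h]; exact InS.bot

/-- A map between preorders is ω-(Scott-)continuous if it is monotone and preserves
least upper bounds of enumerable directed subsets. -/
def OmegaContinuous {C D : Type} [Preorder C] [Preorder D] (f : C → D) : Prop :=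
  Monotone f ∧
    ∀ (U : Set C) (x : C), U.Countable → U.Nonempty → DirectedOn (· ≤ ·) U →
      IsLUB U x → IsLUB (f '' U) (f x)

/-- A preorder is an ω-cpo if every enumerable directed subset has a least upper bound. -/
def IsOmegaCPO (C : Type) [Preorder C] : Prop :=
  ∀ U : Set C, U.Countable → U.Nonempty → DirectedOn (· ≤ ·) U → ∃ x, IsLUB U x

/-- A cover-preserving monotone map from an ω-cpo presentation `(P, Cov)` into an
ordered set: the image of each cover has a least upper bound above the image of the
covered element. -/
def CovMorphism {P C : Type} [Preorder P] [Preorder C]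
    (Cov : P → Set P → Prop) (f : P → C) : Prop :=
  Monotone f ∧ ∀ p U, Cov p U → ∃ s, IsLUB (f '' U) s ∧ f p ≤ s

/-- `(Pω, η)` is the free ω-cpo completion of the ω-cpo presentation `(P, Cov)`:
`Pω` is an ω-cpo, `η` is a cover-preserving monotone map, and every cover-preserving
monotone map from `P` into an ω-cpo extends uniquely to an ω-continuous map on `Pω`. -/
structure IsFreeOmegaCompletion {P : Type} [Preorder P] (Cov : P → Set P → Prop)
    (Pω : Type) [PartialOrder Pω] (η : P → Pω) : Prop where
  cpo : IsOmegaCPO Pω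
  eta_morph : CovMorphism Cov η
  extend_unique : ∀ (C : Type) [PartialOrder C], IsOmegaCPO C →
    ∀ f : P → C, CovMorphism Cov f →
      ∃! g : Pω → C, OmegaContinuous g ∧ ∀ p, g (η p) = f p

/-- The Sierpinski space as a subtype of the propositions, ordered by implication. -/
abbrev Sierp := {p : Prop // InS p}

theorem InS.or {p q : Prop} (hp : InS p) (hq : InS q) : InS (p ∨ q) := by
  induction hp with
  | bot => simp only [false_or]; exact hq
  | top => simp only [true_or]; exact InS.top
  | sup c mono h ih =>
      have e : ((∃ n, c n) ∨ q) = (∃ n, c n ∨ q) := propext <| by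
        constructor
        · rintro (⟨n, hn⟩ | hq')
          · exact ⟨n, Or.inl hn⟩
          · exact ⟨0, Or.inr hq'⟩
        · rintro ⟨n, hn | hq'⟩
          · exact Or.inl ⟨n, hn⟩
          · exact Or.inr hq'
      rw [e]
      exact InS.sup _ (fun n => Or.imp_left (mono n)) ih

theorem InS.and {p q : Prop} (hp : InS p) (hq : InS q) : InS (p ∧ q) := by
  induction hp with
  | bot => simp only [false_and]; exact InS.bot
  | top => simp only [true_and]; exact hq
  | sup c mono h ih =>
      have e : ((∃ n, c n) ∧ q) = (∃ n, c n ∧ q) := propext <| by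
        constructor
        · rintro ⟨⟨n, hn⟩, hq'⟩
          exact ⟨n, hn, hq'⟩
        · rintro ⟨n, hn, hq'⟩
          exact ⟨⟨n, hn⟩, hq'⟩
      rw [e]
      exact InS.sup _ (fun n => And.imp_left (mono n)) ih

theorem InS.exists_nat (p : ℕ → Prop) (h : ∀ n, InS (p n)) : InS (∃ n, p n) := by
  have key : ∀ m, InS (∃ k, k ≤ m ∧ p k) := by
    intro m
    induction m with
    | zero =>
        have e : (∃ k, k ≤ 0 ∧ p k) = p 0 := propext <| by
          constructor
          · rintro ⟨k, hk, hp⟩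
            rwa [Nat.le_zero.mp hk] at hp
          · exact fun hp => ⟨0, le_refl _, hp⟩
        rw [e]; exact h 0
    | succ m ih =>
        have e : (∃ k, k ≤ m + 1 ∧ p k) = ((∃ k, k ≤ m ∧ p k) ∨ p (m + 1)) :=
          propext <| by
            constructor
            · rintro ⟨k, hk, hp⟩
              rcases Nat.eq_or_lt_of_le hk with rfl | hk'
              · exact Or.inr hp
              · exact Or.inl ⟨k, Nat.lt_succ_iff.mp hk', hp⟩
            · rintro (⟨k, hk, hp⟩ | hp)
              · exact ⟨k, hk.trans (Nat.le_succ m), hp⟩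
              · exact ⟨m + 1, le_refl _, hp⟩
        rw [e]; exact ih.or (h (m + 1))
  have e : (∃ n, p n) = (∃ m, ∃ k, k ≤ m ∧ p k) := propext <| by
    constructor
    · rintro ⟨n, hn⟩
      exact ⟨n, n, le_refl _, hn⟩
    · rintro ⟨m, k, _, hk⟩
      exact ⟨k, hk⟩
  rw [e]
  exact InS.sup _ (fun m ⟨k, hk, hp⟩ => ⟨k, hk.trans (Nat.le_succ m), hp⟩) key

def Sierp.botS : Sierp := ⟨False, InS.bot⟩
def Sierp.topS : Sierp := ⟨True, InS.top⟩
def Sierp.or (s t : Sierp) : Sierp := ⟨s.1 ∨ t.1, s.2.or t.2⟩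
def Sierp.and (s t : Sierp) : Sierp := ⟨s.1 ∧ t.1, s.2.and t.2⟩

/-- Enumerable joins in the Sierpinski space. -/
def Sierp.joinSeq (s : ℕ → Sierp) : Sierp :=
  ⟨∃ n, (s n).1, InS.exists_nat _ (fun n => (s n).2)⟩

/-- A lower real: an `𝕊`-valued, inhabited, rounded, downward-closed cut of rationals. -/
structure LowerReal where
  cut : ℚ → Prop
  inS : ∀ q, InS (cut q)
  inhab : ∃ q, cut q
  rounded : ∀ q, cut q → ∃ q', q < q' ∧ cut q'
  lower : ∀ q q', q < q' → cut q' → cut q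

instance : Preorder LowerReal where
  le L₁ L₂ := ∀ q, L₁.cut q → L₂.cut q
  le_refl _ _ h := h
  le_trans _ _ _ h₁ h₂ q hq := h₂ q (h₁ q hq)

/-- The lower real associated to a rational number. -/
def ratLR (q : ℚ) : LowerReal where
  cut p := p < q
  inS _ := InS.of_decidable _
  inhab := ⟨q - 1, by linarith⟩
  rounded p hp := ⟨(p + q) / 2, by constructor <;> linarith⟩
  lower _ _ h h' := lt_trans h h'

/-- The non-negative rationals. -/
abbrev QPlus := {q : ℚ // 0 ≤ q}

/-- The non-negative lower reals `ℝ_l⁺`. -/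
abbrev NNLowerReal := {L : LowerReal // ∀ q : ℚ, q < 0 → L.cut q}

/-- The non-negative lower real associated to a non-negative rational. -/
def ratNN (q : QPlus) : NNLowerReal :=
  ⟨ratLR q.1, fun _ hp => lt_of_lt_of_le hp q.2⟩

def zeroNN : NNLowerReal := ratNN ⟨0, le_refl 0⟩
def oneNN : NNLowerReal := ratNN ⟨1, by norm_num⟩

/-- `r : 𝕊 → ℝ_l⁺`, the unique ω-continuous map with `r ⊥ = 0` and `r ⊤ = 1`;
`indicatorLR (U a)` is the real indicator function `𝟙_U` of an open `U`. -/
def indicatorLR (s : Sierp) : NNLowerReal :=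
  ⟨{ cut := fun q => q < 0 ∨ (s.1 ∧ q < 1)
     inS := fun q => by
       show InS (q < 0 ∨ (s.1 ∧ q < 1))
       by_cases h0 : q < 0
       · rw [eq_true (Or.inl h0 : q < 0 ∨ (s.1 ∧ q < 1))]; exact InS.top
       · rw [eq_false h0, false_or]
         by_cases h1 : q < 1
         · rw [eq_true h1, and_true]; exact s.2
         · rw [eq_false h1, and_false]; exact InS.bot
     inhab := ⟨-1, Or.inl (by norm_num)⟩
     rounded := fun q hq => by
       rcases hq with h | ⟨hs, h1⟩
       · exact ⟨q / 2, by linarith, Or.inl (by linarith)⟩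
       · exact ⟨(q + 1) / 2, by
           constructor
           · linarith
           · exact Or.inr ⟨hs, by linarith⟩⟩
     lower := fun q q' h hq' => by
       rcases hq' with h' | ⟨hs, h1⟩
       · exact Or.inl (lt_trans h h')
       · by_cases h0 : q < 0
         · exact Or.inl h0
         · exact Or.inr ⟨hs, lt_trans h h1⟩ },
   fun q hq => Or.inl hq⟩

/-- Specification of the addition on the non-negative lower reals: ω-continuous in
each argument and extending addition of non-negative rationals. -/
def AddSpecNN (add : NNLowerReal → NNLowerReal → NNLowerReal) : Prop :=
  (∀ L, OmegaContinuous (add L)) ∧ (∀ L, OmegaContinuous (fun x => add x L)) ∧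
    ∀ q q' : QPlus, add (ratNN q) (ratNN q') = ratNN ⟨q.1 + q'.1, add_nonneg q.2 q'.2⟩

/-- Specification of the multiplication on the non-negative lower reals: ω-continuous
in each argument and extending multiplication of non-negative rationals. -/
def MulSpecNN (mul : NNLowerReal → NNLowerReal → NNLowerReal) : Prop :=
  (∀ L, OmegaContinuous (mul L)) ∧ (∀ L, OmegaContinuous (fun x => mul x L)) ∧
    ∀ q q' : QPlus, mul (ratNN q) (ratNN q') = ratNN ⟨q.1 * q'.1, mul_nonneg q.2 q'.2⟩

/-- A lower integral on `A`: an ω-continuous, bottom-preserving, additive map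
`(A → ℝ_l⁺) → ℝ_l⁺`. -/
def IsLowerIntegral {A : Type} (add : NNLowerReal → NNLowerReal → NNLowerReal)
    (I : (A → NNLowerReal) → NNLowerReal) : Prop :=
  OmegaContinuous I ∧ I (fun _ => zeroNN) = zeroNN ∧
    ∀ f g : A → NNLowerReal, I (fun a => add (f a) (g a)) = add (I f) (I g)

/-- A valuation on `A`: an ω-continuous, bottom-preserving, modular map
`𝒪(A) = (A → 𝕊) → ℝ_l⁺`. -/
def IsValuation {A : Type} (add : NNLowerReal → NNLowerReal → NNLowerReal)
    (μ : (A → Sierp) → NNLowerReal) : Prop :=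
  OmegaContinuous μ ∧ μ (fun _ => Sierp.botS) = zeroNN ∧
    ∀ U V : A → Sierp,
      add (μ U) (μ V) =
        add (μ (fun a => (U a).or (V a))) (μ (fun a => (U a).and (V a)))

/-- The open subset `[f > q] = {x ∈ A | q < f x}` of `A`. -/
def openGT {A : Type} (f : A → NNLowerReal) (q : ℚ) : A → Sierp :=
  fun a => ⟨(f a).1.cut q, (f a).1.inS q⟩

/-- The approximating simple sum `s_{f,m,n} = (1/m) ∑_{i=1}^{mn} μ([f > i/m])`. -/
def sFMN {A : Type} (add mul : NNLowerReal → NNLowerReal → NNLowerReal)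
    (μ : (A → Sierp) → NNLowerReal) (f : A → NNLowerReal) (m n : ℕ) : NNLowerReal :=
  mul (ratNN ⟨1 / (m : ℚ), by positivity⟩)
    ((List.range (m * n)).foldr
      (fun i acc => add (μ (openGT f (((i : ℚ) + 1) / (m : ℚ)))) acc) zeroNN)


/-!
Classically every proposition lies in `𝕊`, so the opens of `A` are all of its subsets, and a
non-negative lower real is determined by the supremum of its cut, which identifies `ℝ_l⁺` with
`ℝ≥0∞` as ordered sets. A separately ω-continuous operation extending one on the rationals is
then the corresponding operation of `ℝ≥0∞`, so `add` and `mul` become `+` and `*`.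

A valuation is thus an additive set function on all subsets of `A` that is continuous along
increasing unions, i.e. a measure on the discrete σ-algebra, and its Lebesgue integral is a lower
integral extending it. Conversely a lower integral `I` is determined by its values on indicators:
the staircases below `f` with `m n` steps of height `1 / m` form a countable directed family with
supremum `f`, so by ω-continuity `I f` is the supremum of their integrals, which by additivity are
the sums `s_{f,m,n}`. This formula gives both uniqueness and monotonicity of the correspondence.
-/

open scoped ENNReal
open MeasureTheory Set

noncomputable section

theorem InS.of_prop (p : Prop) : InS p := by
  classical exact InS.of_decidable p

def opensOrderIsoSet (A : Type) : (A → Sierp) ≃o Set A where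
  toFun U := {a | (U a).1}
  invFun S a := ⟨a ∈ S, InS.of_prop _⟩
  left_inv _ := rfl
  right_inv _ := rfl
  map_rel_iff' := Iff.rfl

theorem Sierp.exists_of_isLUB {U : Set Sierp} {x : Sierp} (h : IsLUB U x) (hx : x.1) :
    ∃ s ∈ U, s.1 :=
  h.2 (show (⟨∃ s ∈ U, s.1, InS.of_prop _⟩ : Sierp) ∈ upperBounds U from
    fun s hs hs1 => ⟨s, hs, hs1⟩) hx

namespace NNLowerReal

theorem ext {L M : NNLowerReal} (h : ∀ q, L.1.cut q ↔ M.1.cut q) : L = M := by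
  obtain ⟨⟨c, _⟩, _⟩ := L
  obtain ⟨⟨c', _⟩, _⟩ := M
  obtain rfl : c = c' := funext fun q => propext (h q)
  rfl

theorem cut_iff_lt_iSup (L : NNLowerReal) (q : ℚ) :
    L.1.cut q ↔
      q < 0 ∨ ENNReal.ofReal q < ⨆ p : {p : ℚ // L.1.cut p}, ENNReal.ofReal p := by
  constructor
  · intro hq
    refine or_iff_not_imp_left.2 fun hq0 => ?_
    obtain ⟨q', hqq', hq'⟩ := L.1.rounded q hq
    refine lt_of_lt_of_le ?_ (le_iSup (fun p : {p // L.1.cut p} => ENNReal.ofReal p) ⟨q', hq'⟩)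
    exact ENNReal.ofReal_lt_ofReal_iff'.2 ⟨by exact_mod_cast hqq', by
      exact_mod_cast (not_lt.1 hq0).trans_lt hqq'⟩
  · rintro (hq | hq)
    · exact L.2 q hq
    · obtain ⟨⟨p, hp⟩, hqp⟩ := lt_iSup_iff.1 hq
      exact L.1.lower q p (by exact_mod_cast (ENNReal.ofReal_lt_ofReal_iff'.1 hqp).1) hp

def ofENNReal (x : ℝ≥0∞) : NNLowerReal :=
  ⟨{ cut := fun q => q < 0 ∨ ENNReal.ofReal q < x
     inS := fun _ => InS.of_prop _
     inhab := ⟨-1, Or.inl (by norm_num)⟩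
     rounded := by
       rintro q (hq | hq)
       · exact ⟨q / 2, by linarith, Or.inl (by linarith)⟩
       · obtain ⟨r, -, hqr, hrx⟩ := ENNReal.lt_iff_exists_rat_btwn.1 hq
         exact ⟨r, by exact_mod_cast (ENNReal.ofReal_lt_ofReal_iff'.1 hqr).1, Or.inr hrx⟩
     lower := fun q q' hqq' => Or.imp hqq'.trans
       (ENNReal.ofReal_le_ofReal (by exact_mod_cast hqq'.le)).trans_lt },
   fun _ => Or.inl⟩

def toENNReal : NNLowerReal ≃o ℝ≥0∞ where
  toFun L := ⨆ p : {p : ℚ // L.1.cut p}, ENNReal.ofReal p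
  invFun := ofENNReal
  left_inv L := ext fun q => (cut_iff_lt_iSup L q).symm
  right_inv x := by
    refine le_antisymm (iSup_le fun ⟨q, hq⟩ => ?_) (le_of_forall_lt fun c hc => ?_)
    · rcases hq with hq | hq
      · simp [ENNReal.ofReal_of_nonpos (by exact_mod_cast hq.le : (q : ℝ) ≤ 0)]
      · exact hq.le
    · obtain ⟨r, -, hcr, hrx⟩ := ENNReal.lt_iff_exists_rat_btwn.1 hc
      exact hcr.trans_le (le_iSup (fun p : {p // (ofENNReal x).1.cut p} => ENNReal.ofReal p)
        ⟨r, Or.inr hrx⟩)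
  map_rel_iff' {L M} := by
    refine ⟨fun h q hq => ?_, fun h => iSup_le fun q => le_iSup_of_le ⟨q, h q q.2⟩ le_rfl⟩
    exact (cut_iff_lt_iSup M q).2 (((cut_iff_lt_iSup L q).1 hq).imp_right (·.trans_le h))

theorem cut_iff (L : NNLowerReal) (q : ℚ) :
    L.1.cut q ↔ q < 0 ∨ ENNReal.ofReal q < toENNReal L :=
  cut_iff_lt_iSup L q

theorem toENNReal_symm_apply_cut (x : ℝ≥0∞) (q : ℚ) :
    (toENNReal.symm x).1.cut q ↔ q < 0 ∨ ENNReal.ofReal q < x :=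
  Iff.rfl

theorem eq_of_isLUB {S : Set NNLowerReal} {x y : NNLowerReal} (hx : IsLUB S x)
    (hy : IsLUB S y) : x = y :=
  toENNReal.injective ((toENNReal.isLUB_image'.2 hx).unique (toENNReal.isLUB_image'.2 hy))

theorem toENNReal_ratNN (q : QPlus) : toENNReal (ratNN q) = ENNReal.ofReal q := by
  refine (toENNReal.symm_apply_eq.1 (ext fun p => ?_)).symm
  rw [toENNReal_symm_apply_cut, ENNReal.ofReal_lt_ofReal_iff']
  show _ ↔ p < q.1
  constructor
  · rintro (hp | ⟨hpq, -⟩)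
    · exact hp.trans_le q.2
    · exact_mod_cast hpq
  · intro hpq
    exact or_iff_not_imp_left.2 fun hp => ⟨by exact_mod_cast hpq, by
      exact_mod_cast (not_lt.1 hp).trans_lt hpq⟩

theorem toENNReal_zeroNN : toENNReal zeroNN = 0 := by
  simp [zeroNN, toENNReal_ratNN]

open Classical in
theorem toENNReal_indicatorLR (s : Sierp) :
    toENNReal (indicatorLR s) = if s.1 then 1 else 0 := by
  refine (toENNReal.symm_apply_eq.1 (ext fun q => ?_)).symm
  rw [toENNReal_symm_apply_cut]
  show _ ↔ q < 0 ∨ (s.1 ∧ q < 1)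
  by_cases hs : s.1
  · simp only [hs, true_and, if_true, ENNReal.ofReal_lt_one]
    norm_cast
  · simp [hs]

theorem toENNReal_eq_iSup_of_isLUB {ι : Type*} {f : ι → NNLowerReal} {x : NNLowerReal}
    (h : IsLUB (range f) x) : toENNReal x = ⨆ i, toENNReal (f i) := by
  rw [← sSup_range, range_comp']
  exact (toENNReal.isLUB_image'.2 h).sSup_eq.symm

abbrev RatBelow (x : NNLowerReal) : Type := {q : QPlus // ratNN q ≤ x}

instance (x : NNLowerReal) : Nonempty (RatBelow x) :=
  ⟨⟨0, fun q hq => x.2 q hq⟩⟩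

theorem isLUB_ratBelow (x : NNLowerReal) : IsLUB (range fun q : RatBelow x => ratNN q.1) x := by
  refine ⟨forall_mem_range.2 fun q => q.2, fun b hb => toENNReal.le_iff_le.1 ?_⟩
  refine le_of_forall_lt fun c hc => ?_
  obtain ⟨r, hr, hcr, hrx⟩ := ENNReal.lt_iff_exists_rat_btwn.1 hc
  have hrx' : ratNN ⟨r, hr⟩ ≤ x :=
    toENNReal.le_iff_le.1 (by rw [toENNReal_ratNN]; exact hrx.le)
  calc c < ENNReal.ofReal r := hcr
    _ = toENNReal (ratNN ⟨r, hr⟩) := (toENNReal_ratNN ⟨r, hr⟩).symm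
    _ ≤ toENNReal b := toENNReal.monotone (hb ⟨⟨⟨r, hr⟩, hrx'⟩, rfl⟩)

theorem iSup_ratBelow (x : NNLowerReal) :
    ⨆ q : RatBelow x, ENNReal.ofReal q.1.1 = toENNReal x := by
  simp only [← toENNReal_ratNN]
  exact (toENNReal_eq_iSup_of_isLUB (isLUB_ratBelow x)).symm

theorem _root_.OmegaContinuous.toENNReal_apply {g : NNLowerReal → NNLowerReal}
    (hg : OmegaContinuous g) (x : NNLowerReal) :
    toENNReal (g x) = ⨆ q : RatBelow x, toENNReal (g (ratNN q.1)) := by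
  refine toENNReal_eq_iSup_of_isLUB ?_
  rw [range_comp']
  refine hg.2 _ x (countable_range _) (range_nonempty _) ?_ (isLUB_ratBelow x)
  rintro _ ⟨q, rfl⟩ _ ⟨q', rfl⟩
  rcases le_total q.1.1 q'.1.1 with h | h
  · exact ⟨_, ⟨q', rfl⟩, fun p hp => hp.trans_le h, le_rfl⟩
  · exact ⟨_, ⟨q, rfl⟩, le_rfl, fun p hp => hp.trans_le h⟩

theorem toENNReal_binop_of_omegaContinuous {op : NNLowerReal → NNLowerReal → NNLowerReal}
    {F : ℝ≥0∞ → ℝ≥0∞ → ℝ≥0∞} (hl : ∀ L, OmegaContinuous (op L))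
    (hr : ∀ L, OmegaContinuous fun x => op x L)
    (hrat : ∀ q q' : QPlus,
      toENNReal (op (ratNN q) (ratNN q')) = F (ENNReal.ofReal q) (ENNReal.ofReal q'))
    (hFl : ∀ {ι : Type} [Nonempty ι] (a : ι → ℝ≥0∞) b,
      F (⨆ i, a i) b = ⨆ i, F (a i) b)
    (hFr : ∀ {ι : Type} [Nonempty ι] a (b : ι → ℝ≥0∞),
      F a (⨆ i, b i) = ⨆ i, F a (b i))
    (x y : NNLowerReal) : toENNReal (op x y) = F (toENNReal x) (toENNReal y) := by
  calc toENNReal (op x y) = ⨆ q' : RatBelow y, toENNReal (op x (ratNN q'.1)) :=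
        (hl x).toENNReal_apply y
    _ = ⨆ q' : RatBelow y, ⨆ q : RatBelow x, F (ENNReal.ofReal q.1.1) (ENNReal.ofReal q'.1.1) :=
        iSup_congr fun q' => ((hr _).toENNReal_apply x).trans (iSup_congr fun q => hrat _ _)
    _ = F (toENNReal x) (toENNReal y) := by
        simp_rw [← hFl fun q : RatBelow x => ENNReal.ofReal q.1.1, iSup_ratBelow,
          ← hFr (toENNReal x) fun q : RatBelow y => ENNReal.ofReal q.1.1, iSup_ratBelow]

variable {add mul : NNLowerReal → NNLowerReal → NNLowerReal}

theorem toENNReal_add (hadd : AddSpecNN add)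
    (x y : NNLowerReal) : toENNReal (add x y) = toENNReal x + toENNReal y :=
  toENNReal_binop_of_omegaContinuous hadd.1 hadd.2.1
    (fun q q' => by
      rw [hadd.2.2, toENNReal_ratNN]
      push_cast
      exact ENNReal.ofReal_add (by exact_mod_cast q.2) (by exact_mod_cast q'.2))
    (fun a _ => ENNReal.iSup_add a) (fun _ b => ENNReal.add_iSup b) x y

theorem toENNReal_mul (hmul : MulSpecNN mul)
    (x y : NNLowerReal) : toENNReal (mul x y) = toENNReal x * toENNReal y :=
  toENNReal_binop_of_omegaContinuous hmul.1 hmul.2.1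
    (fun q q' => by
      rw [hmul.2.2, toENNReal_ratNN]
      push_cast
      exact ENNReal.ofReal_mul (by exact_mod_cast q.2))
    (fun a b => ENNReal.iSup_mul a b) (fun a b => ENNReal.mul_iSup a b) x y

theorem toENNReal_symm_add (hadd : AddSpecNN add) (x y : ℝ≥0∞) :
    toENNReal.symm (x + y) = add (toENNReal.symm x) (toENNReal.symm y) :=
  toENNReal.injective (by simp [toENNReal_add hadd])

theorem toENNReal_symm_zero : toENNReal.symm 0 = zeroNN :=
  toENNReal.symm_apply_eq.2 toENNReal_zeroNN.symm

theorem toENNReal_foldr (hadd : AddSpecNN add) {β : Type*} (F : β → NNLowerReal) (l : List β) :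
    toENNReal (l.foldr (fun i acc => add (F i) acc) zeroNN) =
      (l.map fun i => toENNReal (F i)).sum := by
  induction l with
  | nil => exact toENNReal_zeroNN
  | cons i l ih => simp [toENNReal_add hadd, ih]

theorem toENNReal_sFMN {A : Type} (hadd : AddSpecNN add) (hmul : MulSpecNN mul)
    (μ : (A → Sierp) → NNLowerReal) (f : A → NNLowerReal) (m n : ℕ) :
    toENNReal (sFMN add mul μ f m n) =
      ENNReal.ofReal (1 / m) *
        ∑ i ∈ Finset.range (m * n), toENNReal (μ (openGT f ((i + 1) / m))) := by
  rw [sFMN, toENNReal_mul hmul, toENNReal_ratNN, toENNReal_foldr hadd]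
  simp only [List.pure_def, List.bind_eq_flatMap, ← List.map_eq_flatMap, List.map_map]
  rw [Finset.sum_eq_multiset_sum, Finset.range_val, Multiset.range, Multiset.map_coe,
    Multiset.sum_coe]
  push_cast
  rfl

theorem toENNReal_indicatorLR_openGT {A : Type} (f : A → NNLowerReal) {q : ℚ} (hq : 0 ≤ q)
    (a : A) :
    toENNReal (indicatorLR (openGT f q a)) =
      if ENNReal.ofReal q < toENNReal (f a) then 1 else 0 := by
  classical
  rw [toENNReal_indicatorLR]
  exact if_congr ((cut_iff _ q).trans (or_iff_right hq.not_gt)) rfl rfl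

end NNLowerReal

open NNLowerReal

section OmegaContinuous

variable {C D E : Type} [Preorder C] [Preorder D] [Preorder E]

theorem OrderIso.omegaContinuous (e : C ≃o D) : OmegaContinuous e :=
  ⟨e.monotone, fun _ _ _ _ _ h => e.isLUB_image'.2 h⟩

theorem OmegaContinuous.comp {g : D → E} {f : C → D} (hg : OmegaContinuous g)
    (hf : OmegaContinuous f) : OmegaContinuous (g ∘ f) := by
  refine ⟨hg.1.comp hf.1, fun U x hc hne hd hx => ?_⟩
  rw [image_comp]
  exact hg.2 _ _ (hc.image f) (hne.image f) (hd.mono_comp hf.1) (hf.2 U x hc hne hd hx)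

theorem OmegaContinuous.piMap {A : Type} {r : C → D} (hr : OmegaContinuous r) :
    OmegaContinuous fun (U : A → C) a => r (U a) := by
  refine ⟨fun U V h a => hr.1 (h a), fun U x hc hne hd hx => isLUB_pi.2 fun a => ?_⟩
  have := hr.2 _ _ (hc.image (Function.eval a)) (hne.image _)
    (hd.mono_comp (Function.monotone_eval a)) (isLUB_pi.1 hx a)
  rw [image_image] at this ⊢
  exact this

end OmegaContinuous

theorem omegaContinuous_indicatorLR : OmegaContinuous indicatorLR := by
  have hmono : Monotone indicatorLR := fun s t h => by
    rw [← toENNReal.le_iff_le, toENNReal_indicatorLR, toENNReal_indicatorLR]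
    by_cases hs : s.1
    · simp [hs, h hs]
    · simp [hs]
  refine ⟨hmono, fun U x _ _ _ hx => ⟨hmono.mem_upperBounds_image hx.1, fun b hb => ?_⟩⟩
  rw [← toENNReal.le_iff_le, toENNReal_indicatorLR]
  split_ifs with hx1
  · obtain ⟨s, hs, hs1⟩ := Sierp.exists_of_isLUB hx hx1
    simpa [toENNReal_indicatorLR, hs1] using toENNReal.monotone (hb (mem_image_of_mem _ hs))
  · exact zero_le

theorem indicatorLR_botS : indicatorLR Sierp.botS = zeroNN :=
  toENNReal.injective (by simp [toENNReal_indicatorLR, toENNReal_zeroNN, Sierp.botS])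

theorem add_indicatorLR {add : NNLowerReal → NNLowerReal → NNLowerReal} (hadd : AddSpecNN add)
    (s t : Sierp) :
    add (indicatorLR s) (indicatorLR t) =
      add (indicatorLR (s.or t)) (indicatorLR (s.and t)) := by
  apply toENNReal.injective
  simp only [toENNReal_add hadd, toENNReal_indicatorLR, Sierp.or, Sierp.and]
  by_cases hs : s.1 <;> by_cases ht : t.1 <;> simp [hs, ht, add_comm]

theorem omegaContinuous_lintegral {A : Type} [MeasurableSpace A] [DiscreteMeasurableSpace A]
    (ν : Measure A) : OmegaContinuous fun g : A → ℝ≥0∞ => ∫⁻ a, g a ∂ν := by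
  refine ⟨fun f g h => lintegral_mono h, fun U x hc hne hd hx => ?_⟩
  have : Countable U := hc.to_subtype
  rw [← hx.sSup_eq, sSup_eq_iSup', image_eq_range]
  simp only [iSup_apply]
  rw [lintegral_iSup_directed (fun _ => Measurable.of_discrete.aemeasurable) hd.directed_val]
  exact isLUB_iSup

section StepApprox

def stepApprox (m n : ℕ) (x : ℝ≥0∞) : ℝ≥0∞ :=
  ((Finset.range (m * n)).filter fun i : ℕ => ((i + 1 : ℕ) : ℝ≥0∞) / m < x).card / m

variable {m n : ℕ} {x : ℝ≥0∞}

theorem le_stepApprox {j : ℕ} (hj : j ≤ m * n) (hjx : (j : ℝ≥0∞) / m < x) :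
    (j : ℝ≥0∞) / m ≤ stepApprox m n x := by
  refine ENNReal.div_le_div_right (Nat.cast_le.2 ?_) _
  calc j = (Finset.range j).card := (Finset.card_range j).symm
    _ ≤ _ := Finset.card_le_card fun i hi => ?_
  have hij : i < j := Finset.mem_range.1 hi
  refine Finset.mem_filter.2 ⟨Finset.mem_range.2 (hij.trans_le hj), lt_of_le_of_lt ?_ hjx⟩
  exact ENNReal.div_le_div_right (by exact_mod_cast hij) _

theorem stepApprox_eq_zero_or_lt (m n : ℕ) (x : ℝ≥0∞) :
    stepApprox m n x = 0 ∨ stepApprox m n x < x := by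
  set F := (Finset.range (m * n)).filter fun i : ℕ => ((i + 1 : ℕ) : ℝ≥0∞) / m < x
  rcases F.eq_empty_or_nonempty with h | h
  · left
    show (F.card : ℝ≥0∞) / m = 0
    simp [h]
  · right
    have hcard : F.card ≤ F.max' h + 1 := by
      calc F.card ≤ (Finset.range (F.max' h + 1)).card :=
            Finset.card_le_card fun i hi => Finset.mem_range.2 (Nat.lt_succ_of_le (F.le_max' i hi))
        _ = _ := Finset.card_range _
    calc stepApprox m n x ≤ ((F.max' h + 1 : ℕ) : ℝ≥0∞) / m :=
          ENNReal.div_le_div_right (by exact_mod_cast hcard) _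
      _ < x := (Finset.mem_filter.1 (F.max'_mem h)).2

theorem stepApprox_le (m n : ℕ) (x : ℝ≥0∞) : stepApprox m n x ≤ x :=
  (stepApprox_eq_zero_or_lt m n x).elim (fun h => h ▸ zero_le) le_of_lt

theorem stepApprox_mono {m' n' : ℕ} (hm : m ∣ m') (hm' : 0 < m') (hn : n ≤ n') :
    stepApprox m n x ≤ stepApprox m' n' x := by
  obtain ⟨k, rfl⟩ := hm
  have hk : k ≠ 0 := by rintro rfl; simp at hm'
  calc stepApprox m n x ≤ stepApprox (m * k) n x := by
        rcases stepApprox_eq_zero_or_lt m n x with h | h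
        · exact h ▸ zero_le
        -- a nonzero staircase `c / m < x` is reached by the finer one in `c k` steps
        set c := ((Finset.range (m * n)).filter
          fun i : ℕ => ((i + 1 : ℕ) : ℝ≥0∞) / m < x).card
        have hc : c ≤ m * n := (Finset.card_filter_le _ _).trans (Finset.card_range _).le
        have hrefine : stepApprox m n x = ((c * k : ℕ) : ℝ≥0∞) / (m * k : ℕ) := by
          push_cast
          exact (ENNReal.mul_div_mul_right _ _ (by exact_mod_cast hk)
            (ENNReal.natCast_ne_top k)).symm
        rw [hrefine] at h ⊢
        exact le_stepApprox (by nlinarith) h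
    _ ≤ stepApprox (m * k) n' x :=
        ENNReal.div_le_div_right (Nat.cast_le.2 (Finset.card_le_card (Finset.filter_subset_filter _
          (Finset.range_subset_range.2 (Nat.mul_le_mul_left _ hn))))) _

theorem ENNReal.exists_nat_div_btwn {a b : ℝ≥0∞} (h : a < b) :
    ∃ j m : ℕ, 0 < m ∧ a < (j : ℝ≥0∞) / m ∧ (j : ℝ≥0∞) / m < b := by
  obtain ⟨q, hq, haq, hqb⟩ := ENNReal.lt_iff_exists_rat_btwn.1 h
  have hnum : ((q.num.toNat : ℕ) : ℝ) = q.num := by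
    exact_mod_cast Int.toNat_of_nonneg (Rat.num_nonneg.2 hq)
  have hq' : ENNReal.ofReal q = (q.num.toNat : ℝ≥0∞) / q.den := by
    rw [Rat.cast_def, ← hnum, ENNReal.ofReal_div_of_pos (by exact_mod_cast q.den_pos),
      ENNReal.ofReal_natCast, ENNReal.ofReal_natCast]
  exact ⟨q.num.toNat, q.den, q.den_pos, hq' ▸ haq, hq' ▸ hqb⟩

theorem ENNReal.ofReal_nat_add_one_div {i m : ℕ} (hm : 0 < m) :
    ENNReal.ofReal (((i + 1) / m : ℚ) : ℝ) = ((i + 1 : ℕ) : ℝ≥0∞) / m := by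
  push_cast
  rw [ENNReal.ofReal_div_of_pos (by exact_mod_cast hm),
    ENNReal.ofReal_add (by positivity) zero_le_one]
  simp

theorem isLUB_stepApprox (x : ℝ≥0∞) :
    IsLUB {y | ∃ m n : ℕ, 0 < m ∧ 0 < n ∧ y = stepApprox m n x} x := by
  refine ⟨fun _ ⟨m, n, _, _, hy⟩ => hy ▸ stepApprox_le m n x,
    fun b hb => le_of_forall_lt fun c hc => ?_⟩
  obtain ⟨j, m, hm, hcj, hjx⟩ := ENNReal.exists_nat_div_btwn hc
  calc c < (j : ℝ≥0∞) / m := hcj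
    _ ≤ stepApprox m (max j 1) x :=
        le_stepApprox ((le_max_left j 1).trans (Nat.le_mul_of_pos_left _ hm)) hjx
    _ ≤ b := hb ⟨m, max j 1, hm, by omega, rfl⟩

end StepApprox

section LowerIntegral

variable {A : Type} {add mul : NNLowerReal → NNLowerReal → NNLowerReal}
  {I J : (A → NNLowerReal) → NNLowerReal} {μ : (A → Sierp) → NNLowerReal}

theorem IsLowerIntegral.isValuation_indicatorLR (hadd : AddSpecNN add)
    (hI : IsLowerIntegral add I) :
    IsValuation add fun U : A → Sierp => I fun a => indicatorLR (U a) := by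
  refine ⟨hI.1.comp omegaContinuous_indicatorLR.piMap, ?_, fun U V => ?_⟩
  · simpa only [indicatorLR_botS] using hI.2.1
  · rw [← hI.2.2, ← hI.2.2]
    exact congrArg I (funext fun a => add_indicatorLR hadd (U a) (V a))

def IsLowerIntegral.toAddMonoidHom (hadd : AddSpecNN add) (hI : IsLowerIntegral add I) :
    (A → ℝ≥0∞) →+ ℝ≥0∞ where
  toFun g := toENNReal (I fun a => toENNReal.symm (g a))
  map_zero' := by simp [toENNReal_symm_zero, hI.2.1, toENNReal_zeroNN]
  map_add' f g := by
    show toENNReal (I fun a => toENNReal.symm (f a + g a)) = _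
    simp_rw [toENNReal_symm_add hadd]
    rw [hI.2.2, toENNReal_add hadd]

def stepApproxFun (m n : ℕ) (f : A → NNLowerReal) : A → NNLowerReal :=
  fun a => toENNReal.symm (stepApprox m n (toENNReal (f a)))

/-- `m` times the staircase is the sum of the indicators of the level sets `[f > (i + 1) / m]`,
so additivity turns its integral into `s_{f,m,n}`. -/
theorem IsLowerIntegral.apply_stepApproxFun (hadd : AddSpecNN add) (hmul : MulSpecNN mul)
    (hI : IsLowerIntegral add I) (hIμ : ∀ U : A → Sierp, I (fun a => indicatorLR (U a)) = μ U)
    (f : A → NNLowerReal) {m : ℕ} (hm : 0 < m) (n : ℕ) :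
    I (stepApproxFun m n f) = sFMN add mul μ f m n := by
  classical
  set Φ := hI.toAddMonoidHom hadd
  set level : ℕ → A → ℝ≥0∞ :=
    fun i a => if ((i + 1 : ℕ) : ℝ≥0∞) / m < toENNReal (f a) then 1 else 0
  have hlevel : ∀ i, Φ (level i) = toENNReal (μ (openGT f ((i + 1) / m))) := fun i => by
    have hind : (fun a => toENNReal.symm (level i a)) =
        fun a => indicatorLR (openGT f ((i + 1) / m) a) := funext fun a => by
      rw [toENNReal.symm_apply_eq, toENNReal_indicatorLR_openGT f (by positivity),
        ENNReal.ofReal_nat_add_one_div hm]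
    rw [← hIμ, ← hind]
    rfl
  have hsplit : m • (fun a => stepApprox m n (toENNReal (f a))) =
      ∑ i ∈ Finset.range (m * n), level i := by
    funext a
    simp only [Pi.smul_apply, Finset.sum_apply, level, stepApprox, nsmul_eq_mul,
      Finset.natCast_card_filter]
    exact ENNReal.mul_div_cancel (by exact_mod_cast hm.ne') (ENNReal.natCast_ne_top m)
  apply toENNReal.injective
  rw [toENNReal_sFMN hadd hmul, ← Finset.sum_congr rfl fun i _ => hlevel i, ← map_sum,
    ← hsplit, map_nsmul, nsmul_eq_mul, one_div, ENNReal.ofReal_inv_of_pos (by exact_mod_cast hm),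
    ENNReal.ofReal_natCast, ← mul_assoc, ENNReal.inv_mul_cancel (by exact_mod_cast hm.ne')
    (ENNReal.natCast_ne_top m), one_mul]
  rfl

theorem toENNReal_stepApproxFun (m n : ℕ) (f : A → NNLowerReal) (a : A) :
    toENNReal (stepApproxFun m n f a) = stepApprox m n (toENNReal (f a)) :=
  toENNReal.apply_symm_apply _

theorem isLUB_stepApproxFun (f : A → NNLowerReal) :
    IsLUB {g | ∃ m n : ℕ, 0 < m ∧ 0 < n ∧ g = stepApproxFun m n f} f := by
  refine ⟨fun _ ⟨m, n, _, _, hg⟩ a => hg ▸ ?_, fun h hh a => ?_⟩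
  · rw [← toENNReal.le_iff_le, toENNReal_stepApproxFun]
    exact stepApprox_le m n _
  · rw [← toENNReal.le_iff_le]
    refine (isLUB_stepApprox _).2 fun _ ⟨m, n, hm, hn, hy⟩ => ?_
    rw [hy, ← toENNReal_stepApproxFun]
    exact toENNReal.monotone (hh ⟨m, n, hm, hn, rfl⟩ a)

theorem directedOn_stepApproxFun (f : A → NNLowerReal) :
    DirectedOn (· ≤ ·) {g | ∃ m n : ℕ, 0 < m ∧ 0 < n ∧ g = stepApproxFun m n f} := by
  have hmono : ∀ {m n m' n' : ℕ}, m ∣ m' → 0 < m' → n ≤ n' →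
      stepApproxFun m n f ≤ stepApproxFun m' n' f := fun hm hm' hn a => by
    rw [← toENNReal.le_iff_le, toENNReal_stepApproxFun, toENNReal_stepApproxFun]
    exact stepApprox_mono hm hm' hn
  rintro _ ⟨m, n, hm, hn, rfl⟩ _ ⟨m', n', hm', hn', rfl⟩
  exact ⟨_, ⟨m * m', max n n', Nat.mul_pos hm hm', lt_max_of_lt_left hn, rfl⟩,
    hmono (dvd_mul_right m m') (Nat.mul_pos hm hm') (le_max_left n n'),
    hmono (dvd_mul_left m' m) (Nat.mul_pos hm hm') (le_max_right n n')⟩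

theorem IsLowerIntegral.isLUB_sFMN (hadd : AddSpecNN add) (hmul : MulSpecNN mul)
    (hI : IsLowerIntegral add I) (hIμ : ∀ U : A → Sierp, I (fun a => indicatorLR (U a)) = μ U)
    (f : A → NNLowerReal) :
    IsLUB {y | ∃ m n : ℕ, 0 < m ∧ 0 < n ∧ y = sFMN add mul μ f m n} (I f) := by
  have himage : {y | ∃ m n : ℕ, 0 < m ∧ 0 < n ∧ y = sFMN add mul μ f m n} =
      I '' {g | ∃ m n : ℕ, 0 < m ∧ 0 < n ∧ g = stepApproxFun m n f} := by
    ext y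
    constructor
    · rintro ⟨m, n, hm, hn, rfl⟩
      exact ⟨_, ⟨m, n, hm, hn, rfl⟩, hI.apply_stepApproxFun hadd hmul hIμ f hm n⟩
    · rintro ⟨_, ⟨m, n, hm, hn, rfl⟩, rfl⟩
      exact ⟨m, n, hm, hn, hI.apply_stepApproxFun hadd hmul hIμ f hm n⟩
  have hcount : {g | ∃ m n : ℕ, 0 < m ∧ 0 < n ∧ g = stepApproxFun m n f}.Countable :=
    (countable_range fun p : ℕ × ℕ => stepApproxFun p.1 p.2 f).mono
      fun _ ⟨m, n, _, _, hg⟩ => show _ ∈ range _ from ⟨(m, n), hg.symm⟩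
  rw [himage]
  exact hI.1.2 _ f hcount ⟨stepApproxFun 1 1 f, ⟨1, 1, one_pos, one_pos, rfl⟩⟩
    (directedOn_stepApproxFun f) (isLUB_stepApproxFun f)

theorem sFMN_mono (hadd : AddSpecNN add) (hmul : MulSpecNN mul) {ν : (A → Sierp) → NNLowerReal}
    (h : ∀ U, μ U ≤ ν U) (f : A → NNLowerReal) (m n : ℕ) :
    sFMN add mul μ f m n ≤ sFMN add mul ν f m n := by
  rw [← toENNReal.le_iff_le, toENNReal_sFMN hadd hmul, toENNReal_sFMN hadd hmul]
  gcongr with i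
  exact h _

theorem IsLowerIntegral.le_of_indicatorLR_le (hadd : AddSpecNN add) (hmul : MulSpecNN mul)
    (hI : IsLowerIntegral add I) (hJ : IsLowerIntegral add J)
    (h : ∀ U : A → Sierp, I (fun a => indicatorLR (U a)) ≤ J (fun a => indicatorLR (U a)))
    (f : A → NNLowerReal) : I f ≤ J f :=
  (hI.isLUB_sFMN hadd hmul (fun _ => rfl) f).2 fun _ ⟨m, n, hm, hn, hy⟩ =>
    hy ▸ (sFMN_mono hadd hmul h f m n).trans
      ((hJ.isLUB_sFMN hadd hmul (fun _ => rfl) f).1 ⟨m, n, hm, hn, rfl⟩)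

end LowerIntegral

section Valuation

variable {A : Type} {add : NNLowerReal → NNLowerReal → NNLowerReal}
  {μ : (A → Sierp) → NNLowerReal}

theorem isSetRing_univ : IsSetRing (univ : Set (Set A)) :=
  ⟨trivial, fun _ _ _ _ => trivial, fun _ _ _ _ => trivial⟩

theorem opensOrderIsoSet_symm_empty : (opensOrderIsoSet A).symm ∅ = fun _ => Sierp.botS :=
  rfl

def IsValuation.toAddContent (hadd : AddSpecNN add) (hμ : IsValuation add μ) :
    AddContent ℝ≥0∞ (univ : Set (Set A)) :=
  isSetRing_univ.addContent_of_union (fun S => toENNReal (μ ((opensOrderIsoSet A).symm S)))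
    (by rw [opensOrderIsoSet_symm_empty, hμ.2.1, toENNReal_zeroNN])
    fun {S T} _ _ hST => by
      have hmod := congrArg toENNReal
        (hμ.2.2 ((opensOrderIsoSet A).symm S) ((opensOrderIsoSet A).symm T))
      rw [toENNReal_add hadd, toENNReal_add hadd,
        show (fun a => Sierp.and _ _) = (opensOrderIsoSet A).symm (S ∩ T) from rfl,
        hST.inter_eq, opensOrderIsoSet_symm_empty, hμ.2.1, toENNReal_zeroNN, add_zero] at hmod
      exact hmod.symm

theorem IsValuation.toAddContent_iUnion (hadd : AddSpecNN add) (hμ : IsValuation add μ)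
    {s : ℕ → Set A} (hs : Monotone s) :
    hμ.toAddContent hadd (⋃ n, s n) = ⨆ n, hμ.toAddContent hadd (s n) := by
  have := (hμ.1.comp (opensOrderIsoSet A).symm.omegaContinuous).2 (range s) _ (countable_range s)
    (range_nonempty s) hs.directed_le.directedOn_range isLUB_iSup
  rw [← range_comp] at this
  exact toENNReal_eq_iSup_of_isLUB this

def IsValuation.toMeasure [MeasurableSpace A] (hadd : AddSpecNN add) (hμ : IsValuation add μ) :
    Measure A :=
  Measure.ofMeasurable (fun S _ => hμ.toAddContent hadd S) (addContent_empty)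
    fun _ _ hd => addContent_iUnion_eq_tsum_of_addContent_iUnion_eq_iSup isSetRing_univ _ hd
      (fun _ => trivial) fun _ _ hs => hμ.toAddContent_iUnion hadd hs

theorem IsValuation.toMeasure_apply [MeasurableSpace A] (hadd : AddSpecNN add)
    (hμ : IsValuation add μ) {S : Set A} (hS : MeasurableSet S) :
    hμ.toMeasure hadd S = toENNReal (μ ((opensOrderIsoSet A).symm S)) :=
  Measure.ofMeasurable_apply S hS

def lowerLIntegral [MeasurableSpace A] (ν : Measure A) : (A → NNLowerReal) → NNLowerReal :=
  fun f => toENNReal.symm (∫⁻ a, toENNReal (f a) ∂ν)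

theorem isLowerIntegral_lowerLIntegral [MeasurableSpace A] [DiscreteMeasurableSpace A]
    (hadd : AddSpecNN add) (ν : Measure A) : IsLowerIntegral add (lowerLIntegral ν) := by
  refine ⟨toENNReal.symm.omegaContinuous.comp
    ((omegaContinuous_lintegral ν).comp toENNReal.omegaContinuous.piMap), ?_, fun f g => ?_⟩
  · simp [lowerLIntegral, toENNReal_zeroNN, toENNReal_symm_zero]
  · simp only [lowerLIntegral, toENNReal_add hadd]
    rw [lintegral_add_left Measurable.of_discrete, toENNReal_symm_add hadd]

theorem lowerLIntegral_indicatorLR [MeasurableSpace A] [DiscreteMeasurableSpace A]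
    (ν : Measure A) (U : A → Sierp) :
    lowerLIntegral ν (fun a => indicatorLR (U a)) =
      toENNReal.symm (ν (opensOrderIsoSet A U)) := by
  classical
  have hind : (fun a => toENNReal (indicatorLR (U a))) = (opensOrderIsoSet A U).indicator 1 :=
    funext fun a => by
      rw [toENNReal_indicatorLR, indicator_apply]
      exact if_congr Iff.rfl rfl rfl
  rw [lowerLIntegral, hind, lintegral_indicator_one MeasurableSet.of_discrete]

theorem IsValuation.exists_isLowerIntegral (hadd : AddSpecNN add) (hμ : IsValuation add μ) :
    ∃ I : (A → NNLowerReal) → NNLowerReal,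
      IsLowerIntegral add I ∧ ∀ U : A → Sierp, I (fun a => indicatorLR (U a)) = μ U := by
  let _ : MeasurableSpace A := ⊤
  refine ⟨lowerLIntegral (hμ.toMeasure hadd), isLowerIntegral_lowerLIntegral hadd _,
    fun U => ?_⟩
  rw [lowerLIntegral_indicatorLR, hμ.toMeasure_apply hadd MeasurableSet.of_discrete,
    OrderIso.symm_apply_apply, OrderIso.symm_apply_apply]

end Valuation

end

/-- Riesz representation theorem: `𝓘 ↦ (U ↦ 𝓘(𝟙_U))` maps lower
integrals to valuations; it is a bijection onto the valuations (every valuation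
extends uniquely to a lower integral), it is an order isomorphism for the pointwise
orders, it restricts to sub-probability integrals/valuations, and its inverse sends a
valuation `μ` to `f ↦ ⋁_{m,n ≥ 1} s_{f,m,n}`. -/
theorem riesz_representation {A : Type}
    (add mul : NNLowerReal → NNLowerReal → NNLowerReal)
    (hadd : AddSpecNN add) (hmul : MulSpecNN mul) :
    (∀ I : (A → NNLowerReal) → NNLowerReal, IsLowerIntegral add I →
        IsValuation add (fun U : A → Sierp => I (fun a => indicatorLR (U a)))) ∧
      (∀ μ : (A → Sierp) → NNLowerReal, IsValuation add μ →
        ∃! I : (A → NNLowerReal) → NNLowerReal,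
          IsLowerIntegral add I ∧
            ∀ U : A → Sierp, I (fun a => indicatorLR (U a)) = μ U) ∧
      (∀ I J : (A → NNLowerReal) → NNLowerReal,
        IsLowerIntegral add I → IsLowerIntegral add J →
          ((∀ f, I f ≤ J f) ↔
            ∀ U : A → Sierp,
              I (fun a => indicatorLR (U a)) ≤ J (fun a => indicatorLR (U a)))) ∧
      (∀ I : (A → NNLowerReal) → NNLowerReal, IsLowerIntegral add I →
        (I (fun _ => indicatorLR Sierp.topS) ≤ oneNN ↔
          (fun U : A → Sierp => I (fun a => indicatorLR (U a)))
            (fun _ => Sierp.topS) ≤ oneNN)) ∧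
      (∀ μ : (A → Sierp) → NNLowerReal, IsValuation add μ →
        ∀ I : (A → NNLowerReal) → NNLowerReal,
          IsLowerIntegral add I →
            (∀ U : A → Sierp, I (fun a => indicatorLR (U a)) = μ U) →
              ∀ f : A → NNLowerReal,
                IsLUB {y | ∃ m n : ℕ, 0 < m ∧ 0 < n ∧ y = sFMN add mul μ f m n}
                  (I f)) := by
  refine ⟨fun I hI => hI.isValuation_indicatorLR hadd, fun μ hμ => ?_,
    fun I J hI hJ => ⟨fun h _ => h _, hI.le_of_indicatorLR_le hadd hmul hJ⟩,
    fun _ _ => Iff.rfl, fun μ _ I hI hIμ => hI.isLUB_sFMN hadd hmul hIμ⟩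
  obtain ⟨I, hI, hIμ⟩ := hμ.exists_isLowerIntegral hadd
  exact ⟨I, ⟨hI, hIμ⟩, fun J ⟨hJ, hJμ⟩ => funext fun f =>
    NNLowerReal.eq_of_isLUB (hJ.isLUB_sFMN hadd hmul hJμ f) (hI.isLUB_sFMN hadd hmul hIμ f)⟩
end

section
/- The continuation monad operations restrict to sub-probability lower integrals: for a ∈ A, the evaluation map η(a)(f) = f(a) is a sub-probability lower integral on A; and if 𝓘 is a (sub-probability) lower integral on A and 𝓙 : A → 𝔊_{≤1}(B) assigns a (sub-probability) lower integral on B to each point, then (𝓘 >>= 𝓙)(f) = 𝓘(a ↦ 𝓙(a)(f)) is a (sub-probability) lower integral on B. These operations satisfy the monad laws (left unit, right unit, associativity). -/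
lemma eval_omegaContinuous {A : Type} (a : A) :
    OmegaContinuous (fun f : A → NNLowerReal => f a) := by
  constructor
  · intro f g h; exact h a
  · intro U x _ _ _ hx
    constructor
    · rintro _ ⟨f, hf, rfl⟩; exact hx.1 hf a
    · intro y hy
      classical
      have hle : x ≤ fun b => if b = a then y else x b := by
        apply hx.2
        intro f hf b
        by_cases hb : b = a
        · subst hb; simp only [if_pos rfl]; exact hy ⟨f, hf, rfl⟩
        · simp only [if_neg hb]; exact hx.1 hf b
      simpa using hle a

lemma bind_omegaContinuous {A B : Type}
    (I : (A → NNLowerReal) → NNLowerReal) (J : A → (B → NNLowerReal) → NNLowerReal)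
    (hI : OmegaContinuous I) (hJ : ∀ a, OmegaContinuous (J a)) :
    OmegaContinuous (fun f : B → NNLowerReal => I (fun a => J a f)) := by
  set m : (B → NNLowerReal) → (A → NNLowerReal) := fun f a => J a f with hm
  have hmmono : Monotone m := fun f g h a => (hJ a).1 h
  refine ⟨fun f g h => hI.1 (hmmono h), ?_⟩
  intro U x hc hne hdir hx
  have hlub : IsLUB (m '' U) (m x) := by
    constructor
    · rintro _ ⟨f, hf, rfl⟩ a
      exact hmmono (hx.1 hf) a
    · intro g hg a
      have hJa : IsLUB (J a '' U) (J a x) := (hJ a).2 U x hc hne hdir hx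
      apply hJa.2
      rintro _ ⟨f, hf, rfl⟩
      exact hg ⟨f, hf, rfl⟩ a
  have hdir' : DirectedOn (· ≤ ·) (m '' U) := by
    rintro _ ⟨f, hf, rfl⟩ _ ⟨g, hg, rfl⟩
    obtain ⟨h, hh, hfh, hgh⟩ := hdir f hf g hg
    exact ⟨m h, ⟨h, hh, rfl⟩, hmmono hfh, hmmono hgh⟩
  have hres := hI.2 (m '' U) (m x) (hc.image m) (hne.image m) hdir' hlub
  rw [Set.image_image] at hres
  exact hres

lemma oneNN_le_ind : oneNN ≤ indicatorLR Sierp.topS := by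
  intro q hq
  exact Or.inr ⟨trivial, hq⟩

lemma ind_le_oneNN : indicatorLR Sierp.topS ≤ oneNN := by
  intro q hq
  rcases hq with h | ⟨_, h⟩
  · exact lt_trans h one_pos
  · exact h

/-- the unit and bind of the continuation monad restrict to
(sub-probability) lower integrals, and satisfy the monad laws (left unit, right unit,
associativity). -/
theorem giry_monad_on_integrals {A B C : Type}
    (add : NNLowerReal → NNLowerReal → NNLowerReal) (hadd : AddSpecNN add) :
    (∀ a : A, IsLowerIntegral add (fun f : A → NNLowerReal => f a)) ∧
      (∀ a : A,
        (fun f : A → NNLowerReal => f a) (fun _ => indicatorLR Sierp.topS) ≤ oneNN) ∧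
      (∀ (I : (A → NNLowerReal) → NNLowerReal)
          (J : A → (B → NNLowerReal) → NNLowerReal),
        IsLowerIntegral add I → (∀ a, IsLowerIntegral add (J a)) →
          IsLowerIntegral add (fun f : B → NNLowerReal => I (fun a => J a f))) ∧
      (∀ (I : (A → NNLowerReal) → NNLowerReal)
          (J : A → (B → NNLowerReal) → NNLowerReal),
        IsLowerIntegral add I → (∀ a, IsLowerIntegral add (J a)) →
          I (fun _ => indicatorLR Sierp.topS) ≤ oneNN →
            (∀ a, J a (fun _ => indicatorLR Sierp.topS) ≤ oneNN) →
              (fun f : B → NNLowerReal => I (fun a => J a f))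
                  (fun _ => indicatorLR Sierp.topS) ≤ oneNN) ∧
      (∀ (a : A) (J : A → (B → NNLowerReal) → NNLowerReal),
        (fun f : B → NNLowerReal =>
            (fun g : A → NNLowerReal => g a) (fun a' => J a' f)) = J a) ∧
      (∀ I : (A → NNLowerReal) → NNLowerReal,
        (fun f : A → NNLowerReal => I (fun a => (fun g : A → NNLowerReal => g a) f)) = I) ∧
      (∀ (I : (A → NNLowerReal) → NNLowerReal)
          (J : A → (B → NNLowerReal) → NNLowerReal)
          (K : B → (C → NNLowerReal) → NNLowerReal),
        (fun f : C → NNLowerReal =>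
            (fun g : B → NNLowerReal => I (fun a => J a g)) (fun b => K b f)) =
          fun f : C → NNLowerReal =>
            I (fun a => (fun g : B → NNLowerReal => J a g) (fun b => K b f))) := by
  refine ⟨?_, ?_, ?_, ?_, ?_, ?_, ?_⟩
  · intro a
    exact ⟨eval_omegaContinuous a, rfl, fun f g => rfl⟩
  · intro a
    exact ind_le_oneNN
  · intro I J hI hJ
    refine ⟨bind_omegaContinuous I J hI.1 (fun a => (hJ a).1), ?_, ?_⟩
    · have e : (fun a => J a (fun _ => zeroNN)) = (fun _ : A => zeroNN) :=
        funext fun a => (hJ a).2.1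
      show I (fun a => J a (fun _ => zeroNN)) = zeroNN
      rw [e]; exact hI.2.1
    · intro f g
      have e : (fun a => J a (fun b => add (f b) (g b))) =
          (fun a => add (J a f) (J a g)) := funext fun a => (hJ a).2.2 f g
      show I (fun a => J a (fun b => add (f b) (g b))) = _
      rw [e]
      exact hI.2.2 _ _
  · intro I J hI hJ hI1 hJ1
    have h1 : (fun a => J a (fun _ => indicatorLR Sierp.topS)) ≤
        (fun _ : A => indicatorLR Sierp.topS) :=
      fun a => le_trans (hJ1 a) oneNN_le_ind
    exact le_trans (hI.1.1 h1) hI1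
  · intro a J; rfl
  · intro I; rfl
  · intro I J K; rfl
end

section
/- The Lebesgue pre-valuation on finite unions of rational intervals: the map λ′ sending a disjoint union (a₁,b₁) ∪̇ ⋯ ∪̇ (a_n,b_n) with a_i < b_i ≤ a_{i+1} to ∑_i (b_i − a_i) is well-defined and monotone on the lattice L of finite unions of bounded open rational intervals, satisfies λ′(x ∪ y) + λ′(x ∩ y) = λ′(x) + λ′(y) for all x, y ∈ L, and is cover-preserving for the cover relation generated by (a,b) ◁ { ∪_j (a′_j, b′_j) : a < a′_j, b′_j < b } under binary unions. -/
/-- The lattice `L` of finite unions of bounded open rational intervals: the least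
subset of `𝒫(ℚ)` containing all intervals `(a, b)` and closed under binary unions. -/
inductive RatOpen : Set ℚ → Prop
  | interval (a b : ℚ) : RatOpen {q | a < q ∧ q < b}
  | union {s t : Set ℚ} : RatOpen s → RatOpen t → RatOpen (s ∪ t)

/-- The cover relation on `L`, generated by
`(a,b) ◁ { finite unions of intervals strictly inside (a,b) }` under binary unions. -/
inductive LCov : Set ℚ → Set (Set ℚ) → Prop
  | basic (a b : ℚ) :
      LCov {q | a < q ∧ q < b}
        {t | RatOpen t ∧ ∃ a' b', a < a' ∧ b' < b ∧ t ⊆ {q | a' < q ∧ q < b'}}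
  | union {s t : Set ℚ} {U V : Set (Set ℚ)} :
      LCov s U → LCov t V → LCov (s ∪ t) {w | ∃ u ∈ U, ∃ v ∈ V, w = u ∪ v}


section LebesgueAux

open MeasureTheory Set

/-- Realization of a set of rationals as a set of reals. -/
def rr (s : Set ℚ) : Set ℝ :=
  {x | ∃ a b : ℚ, (a : ℝ) < x ∧ x < b ∧ ∀ q : ℚ, a < q → q < b → q ∈ s}

lemma rr_mono {s t : Set ℚ} (h : s ⊆ t) : rr s ⊆ rr t := by
  rintro x ⟨a, b, h1, h2, h3⟩
  exact ⟨a, b, h1, h2, fun q hq hq' => h (h3 q hq hq')⟩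

lemma rr_interval (a b : ℚ) : rr {q | a < q ∧ q < b} = Ioo (a : ℝ) b := by
  ext x
  constructor
  · rintro ⟨a', b', h1, h2, h3⟩
    constructor
    · by_contra h
      push_neg at h
      obtain ⟨q, hq1, hq2⟩ := exists_rat_btwn h1
      exact absurd ((h3 q (by exact_mod_cast hq1) (by exact_mod_cast (hq2.trans h2))).1)
        (by push_neg; exact_mod_cast hq2.le.trans h)
    · by_contra h
      push_neg at h
      obtain ⟨q, hq1, hq2⟩ := exists_rat_btwn h2
      exact absurd ((h3 q (by exact_mod_cast h1.trans hq1) (by exact_mod_cast hq2)).2)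
        (by push_neg; exact_mod_cast h.trans hq1.le)
  · rintro ⟨h1, h2⟩
    exact ⟨a, b, h1, h2, fun q hq hq' => ⟨hq, hq'⟩⟩

lemma rr_inter (s t : Set ℚ) : rr (s ∩ t) = rr s ∩ rr t := by
  ext x
  constructor
  · rintro ⟨a, b, h1, h2, h3⟩
    exact ⟨⟨a, b, h1, h2, fun q hq hq' => (h3 q hq hq').1⟩,
           ⟨a, b, h1, h2, fun q hq hq' => (h3 q hq hq').2⟩⟩
  · rintro ⟨⟨a, b, h1, h2, h3⟩, ⟨c, d, h4, h5, h6⟩⟩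
    refine ⟨max a c, min b d, ?_, ?_, ?_⟩
    · push_cast; exact max_lt h1 h4
    · push_cast; exact lt_min h2 h5
    · intro q hq hq'
      rw [max_lt_iff] at hq; rw [lt_min_iff] at hq'
      exact ⟨h3 q hq.1 hq'.1, h6 q hq.2 hq'.2⟩

lemma mem_rr_self {t : Set ℚ} (ht : RatOpen t) {q : ℚ} (hq : q ∈ t) : (q : ℝ) ∈ rr t := by
  induction ht with
  | interval a b => rw [rr_interval]; exact ⟨by exact_mod_cast hq.1, by exact_mod_cast hq.2⟩
  | union hs ht ihs iht =>
    rcases hq with hq | hq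
    · exact rr_mono subset_union_left (ihs hq)
    · exact rr_mono subset_union_right (iht hq)

lemma rr_union {s t : Set ℚ} (hs : RatOpen s) (ht : RatOpen t) :
    rr (s ∪ t) = rr s ∪ rr t := by
  apply Subset.antisymm
  · induction hs generalizing t with
    | interval c d =>
      rintro x ⟨a, b, h1, h2, h3⟩
      rcases le_or_gt x c with hxc | hxc
      · rcases eq_or_lt_of_le hxc with hxc | hxc
        · right
          have hc : (c : ℚ) ∈ t := by
            have h := h3 c (by exact_mod_cast hxc ▸ h1) (by exact_mod_cast hxc ▸ h2)
            rcases h with h | h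
            · exact absurd h.1 (lt_irrefl c)
            · exact h
          exact hxc ▸ mem_rr_self ht hc
        · right
          refine ⟨a, min b c, h1, by push_cast; exact lt_min h2 hxc, ?_⟩
          intro q hq hq'
          rw [lt_min_iff] at hq'
          rcases h3 q hq hq'.1 with h | h
          · exact absurd h.1 (not_lt.mpr hq'.2.le)
          · exact h
      · rcases lt_or_ge x d with hxd | hxd
        · left; rw [rr_interval]; exact ⟨hxc, hxd⟩
        · rcases eq_or_lt_of_le hxd with hxd | hxd
          · right
            have hd : (d : ℚ) ∈ t := by
              have h := h3 d (by exact_mod_cast hxd ▸ h1) (by exact_mod_cast hxd ▸ h2)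
              rcases h with h | h
              · exact absurd h.2 (lt_irrefl d)
              · exact h
            exact hxd ▸ mem_rr_self ht hd
          · right
            refine ⟨max a d, b, by push_cast; exact max_lt h1 hxd, h2, ?_⟩
            intro q hq hq'
            rw [max_lt_iff] at hq
            rcases h3 q hq.1 hq' with h | h
            · exact absurd h.2 (not_lt.mpr hq.2.le)
            · exact h
    | union hs1 hs2 ih1 ih2 =>
      intro x hx
      rw [union_assoc] at hx
      rcases ih1 (RatOpen.union hs2 ht) hx with h | h
      · exact Or.inl (rr_mono subset_union_left h)
      · rcases ih2 ht h with h | h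
        · exact Or.inl (rr_mono subset_union_right h)
        · exact Or.inr h
  · rintro x (hx | hx)
    · exact rr_mono subset_union_left hx
    · exact rr_mono subset_union_right hx

lemma RatOpen.inter {s t : Set ℚ} (hs : RatOpen s) (ht : RatOpen t) : RatOpen (s ∩ t) := by
  induction hs with
  | interval a b =>
    induction ht with
    | interval c d =>
      have : {q : ℚ | a < q ∧ q < b} ∩ {q : ℚ | c < q ∧ q < d}
          = {q : ℚ | max a c < q ∧ q < min b d} := by
        ext q; simp [max_lt_iff, lt_min_iff]; tauto
      rw [this]; exact RatOpen.interval _ _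
    | union h1 h2 ih1 ih2 =>
      rw [inter_union_distrib_left]; exact RatOpen.union ih1 ih2
  | union h1 h2 ih1 ih2 =>
    rw [union_inter_distrib_right]; exact RatOpen.union ih1 ih2

lemma volume_biUnion_Ioo_rat :
    ∀ (n : ℕ) (I : Finset (ℚ × ℚ)), I.card ≤ n →
      ∃ q : ℚ, 0 ≤ q ∧ volume (⋃ p ∈ I, Ioo (↑p.1 : ℝ) ↑p.2) = ENNReal.ofReal (q : ℝ) := by
  intro n
  induction n with
  | zero =>
    intro I hI
    have : I = ∅ := Finset.card_eq_zero.mp (Nat.le_zero.mp hI)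
    subst this
    exact ⟨0, le_refl 0, by simp⟩
  | succ n ih =>
    intro I hI
    rcases Finset.eq_empty_or_nonempty I with rfl | ⟨p, hp⟩
    · exact ⟨0, le_refl 0, by simp⟩
    · set J := I.erase p with hJ
      have hpos : 0 < I.card := Finset.card_pos.mpr ⟨p, hp⟩
      have hcard : J.card ≤ n := by
        have h2 : J.card = I.card - 1 := by rw [hJ]; exact Finset.card_erase_of_mem hp
        omega
      have hins : I = insert p J := by
        rw [hJ, Finset.insert_erase hp]
      obtain ⟨qB, hqB0, hqB⟩ := ih J hcard
      set A : Set ℝ := Ioo (↑p.1 : ℝ) ↑p.2 with hA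
      set B : Set ℝ := ⋃ p' ∈ J, Ioo (↑p'.1 : ℝ) ↑p'.2 with hB
      have hABunion : (⋃ p' ∈ I, Ioo (↑p'.1 : ℝ) ↑p'.2) = A ∪ B := by
        rw [hins, Finset.set_biUnion_insert]
      set qA : ℚ := max (p.2 - p.1) 0 with hqA0
      have hqA0' : 0 ≤ qA := le_max_right _ _
      have hqA : volume A = ENNReal.ofReal (qA : ℝ) := by
        rw [hA, Real.volume_Ioo]
        rcases le_or_gt p.1 p.2 with h | h
        · have : (qA : ℝ) = (p.2 : ℝ) - p.1 := by
            rw [hqA0]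
            rw [max_eq_left (sub_nonneg.mpr h)]
            push_cast; ring
          rw [this]
        · have h1 : ((p.2 : ℝ) - p.1) ≤ 0 := by
            have : (p.2 : ℝ) ≤ p.1 := by exact_mod_cast h.le
            linarith
          have h2 : (qA : ℝ) = 0 := by
            rw [hqA0, max_eq_right (sub_nonpos.mpr h.le)]
            norm_num
          rw [h2, ENNReal.ofReal_eq_zero.mpr h1, ENNReal.ofReal_zero]
      set K := J.image (fun p' : ℚ × ℚ => (max p.1 p'.1, min p.2 p'.2)) with hK
      have hKcard : K.card ≤ n := le_trans (Finset.card_image_le) hcard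
      have hAB : A ∩ B = ⋃ p' ∈ K, Ioo (↑p'.1 : ℝ) ↑p'.2 := by
        rw [hK, Finset.set_biUnion_finset_image, hA, hB, inter_iUnion₂]
        apply iUnion₂_congr
        intro p' _
        rw [Set.Ioo_inter_Ioo]
        push_cast
        rfl
      obtain ⟨qC, hqC0, hqC⟩ := ih K hKcard
      rw [← hAB] at hqC
      have hmeasB : MeasurableSet B :=
        MeasurableSet.biUnion J.countable_toSet (fun p _ => measurableSet_Ioo)
      have key := measure_union_add_inter (μ := volume) A hmeasB
      rw [hqA, hqB, hqC] at key
      have hCA : ENNReal.ofReal (qC : ℝ) ≤ ENNReal.ofReal (qA : ℝ) + ENNReal.ofReal (qB : ℝ) := by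
        rw [← hqA, ← hqB, ← hqC]
        exact le_trans (measure_mono inter_subset_left) le_self_add
      rw [← ENNReal.ofReal_add (by exact_mod_cast hqA0') (by exact_mod_cast hqB0)] at hCA
      have hCle : (qC : ℝ) ≤ (qA : ℝ) + qB :=
        (ENNReal.ofReal_le_ofReal_iff (by exact_mod_cast add_nonneg hqA0' hqB0)).mp hCA
      refine ⟨qA + qB - qC,
        by exact_mod_cast (by push_cast; linarith : (0:ℝ) ≤ ((qA + qB - qC : ℚ) : ℝ)), ?_⟩
      rw [hABunion]
      have heq : ENNReal.ofReal ((↑(qA + qB - qC) : ℝ)) + ENNReal.ofReal (qC : ℝ)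
          = ENNReal.ofReal (qA : ℝ) + ENNReal.ofReal (qB : ℝ) := by
        rw [← ENNReal.ofReal_add (by push_cast; linarith) (by exact_mod_cast hqC0),
            ← ENNReal.ofReal_add (by exact_mod_cast hqA0') (by exact_mod_cast hqB0)]
        congr 1
        push_cast
        ring
      exact WithTop.add_right_cancel ENNReal.ofReal_ne_top (key.trans heq.symm)

lemma rr_rep {s : Set ℚ} (hs : RatOpen s) :
    ∃ I : Finset (ℚ × ℚ), rr s = ⋃ p ∈ I, Ioo (↑p.1 : ℝ) ↑p.2 := by
  induction hs with
  | interval a b => exact ⟨{(a, b)}, by simp [rr_interval]⟩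
  | union h1 h2 ih1 ih2 =>
    obtain ⟨I1, hI1⟩ := ih1
    obtain ⟨I2, hI2⟩ := ih2
    exact ⟨I1 ∪ I2, by rw [rr_union h1 h2, hI1, hI2, Finset.set_biUnion_union]⟩

lemma ratOpen_empty : RatOpen (∅ : Set ℚ) := by
  have : (∅ : Set ℚ) = {q | (0:ℚ) < q ∧ q < 0} := by ext q; simp; intro h; linarith
  rw [this]; exact RatOpen.interval 0 0

lemma rr_empty : rr (∅ : Set ℚ) = ∅ := by
  have := rr_interval 0 0
  have h0 : {q : ℚ | (0:ℚ) < q ∧ q < 0} = (∅ : Set ℚ) := by ext q; simp; intro h; linarith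
  rw [h0] at this
  rw [this]; simp

lemma iUnion_fin_succ' {α : Type*} (n : ℕ) (f : Fin (n+1) → Set α) :
    (⋃ i, f i) = f 0 ∪ ⋃ i : Fin n, f i.succ := by
  ext x; simp [Fin.exists_fin_succ]

lemma ratOpen_finUnion : ∀ (n : ℕ) (a b : Fin n → ℚ),
    RatOpen (⋃ i, {q : ℚ | a i < q ∧ q < b i}) := by
  intro n
  induction n with
  | zero => intro a b; rw [iUnion_of_empty]; exact ratOpen_empty
  | succ n ih =>
    intro a b
    rw [iUnion_fin_succ']
    exact RatOpen.union (RatOpen.interval _ _) (ih _ _)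

lemma rr_finUnion : ∀ (n : ℕ) (a b : Fin n → ℚ),
    rr (⋃ i, {q : ℚ | a i < q ∧ q < b i}) = ⋃ i, Ioo (↑(a i) : ℝ) ↑(b i) := by
  intro n
  induction n with
  | zero => intro a b; rw [iUnion_of_empty, iUnion_of_empty, rr_empty]
  | succ n ih =>
    intro a b
    rw [iUnion_fin_succ', rr_union (RatOpen.interval _ _) (ratOpen_finUnion _ _ _),
        rr_interval, ih, iUnion_fin_succ' n (fun i => Ioo (↑(a i) : ℝ) ↑(b i))]

lemma chain_le {n : ℕ} (a b : Fin n → ℚ) (hab : ∀ i, a i < b i)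
    (hadj : ∀ i j : Fin n, (i : ℕ) + 1 = (j : ℕ) → b i ≤ a j) :
    ∀ i j : Fin n, (i : ℕ) < (j : ℕ) → b i ≤ a j := by
  have key : ∀ d : ℕ, ∀ i j : Fin n, (j : ℕ) = (i : ℕ) + d + 1 → b i ≤ a j := by
    intro d
    induction d with
    | zero => intro i j h; exact hadj i j (by omega)
    | succ d ih =>
      intro i j h
      have hj' : (i : ℕ) + d + 1 < n := by omega
      set j' : Fin n := ⟨(i : ℕ) + d + 1, hj'⟩
      calc b i ≤ a j' := ih i j' rfl
        _ ≤ b j' := (hab j').le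
        _ ≤ a j := hadj j' j (by simp [j']; omega)
  intro i j h
  exact key ((j : ℕ) - (i : ℕ) - 1) i j (by omega)

lemma rr_meas {s : Set ℚ} (hs : RatOpen s) : MeasurableSet (rr s) := by
  obtain ⟨I, hI⟩ := rr_rep hs
  rw [hI]
  exact MeasurableSet.biUnion I.countable_toSet (fun p _ => measurableSet_Ioo)

lemma lam_spec {s : Set ℚ} (hs : RatOpen s) :
    ∃ q : ℚ, 0 ≤ q ∧ volume (rr s) = ENNReal.ofReal (q : ℝ) := by
  obtain ⟨I, hI⟩ := rr_rep hs
  obtain ⟨q, h0, hq⟩ := volume_biUnion_Ioo_rat I.card I le_rfl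
  exact ⟨q, h0, by rw [hI]; exact hq⟩

noncomputable def lamQ (s : Set ℚ) (hs : RatOpen s) : ℚ := (lam_spec hs).choose

lemma lamQ_nonneg {s : Set ℚ} (hs : RatOpen s) : 0 ≤ lamQ s hs := (lam_spec hs).choose_spec.1

lemma lamQ_vol {s : Set ℚ} (hs : RatOpen s) :
    volume (rr s) = ENNReal.ofReal ((lamQ s hs : ℚ) : ℝ) := (lam_spec hs).choose_spec.2

lemma lamQ_eq {s : Set ℚ} (hs : RatOpen s) {q : ℚ} (h0 : 0 ≤ q)
    (h : volume (rr s) = ENNReal.ofReal (q : ℝ)) : lamQ s hs = q := by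
  have := (lamQ_vol hs).symm.trans h
  rw [ENNReal.ofReal_eq_ofReal_iff (by exact_mod_cast lamQ_nonneg hs) (by exact_mod_cast h0)]
    at this
  exact_mod_cast this

lemma lamQ_mono {s t : Set ℚ} (hs : RatOpen s) (ht : RatOpen t) (hsub : s ⊆ t) :
    lamQ s hs ≤ lamQ t ht := by
  have h := measure_mono (μ := volume) (rr_mono hsub)
  rw [lamQ_vol hs, lamQ_vol ht] at h
  have := (ENNReal.ofReal_le_ofReal_iff (by exact_mod_cast lamQ_nonneg ht)).mp h
  exact_mod_cast this

lemma lamQ_modular {s t : Set ℚ} (hs : RatOpen s) (ht : RatOpen t) :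
    lamQ (s ∪ t) (hs.union ht) + lamQ (s ∩ t) (hs.inter ht) = lamQ s hs + lamQ t ht := by
  have key := measure_union_add_inter (μ := volume) (rr s) (rr_meas ht)
  rw [← rr_union hs ht, ← rr_inter s t, lamQ_vol (hs.union ht), lamQ_vol (hs.inter ht),
      lamQ_vol hs, lamQ_vol ht,
      ← ENNReal.ofReal_add (by exact_mod_cast lamQ_nonneg (hs.union ht))
        (by exact_mod_cast lamQ_nonneg (hs.inter ht)),
      ← ENNReal.ofReal_add (by exact_mod_cast lamQ_nonneg hs)
        (by exact_mod_cast lamQ_nonneg ht)] at key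
  have := (ENNReal.ofReal_eq_ofReal_iff
    (by exact_mod_cast add_nonneg (lamQ_nonneg (hs.union ht)) (lamQ_nonneg (hs.inter ht)))
    (by exact_mod_cast add_nonneg (lamQ_nonneg hs) (lamQ_nonneg ht))).mp key
  exact_mod_cast this

lemma lamQ_interval (a b : ℚ) :
    lamQ {q | a < q ∧ q < b} (RatOpen.interval a b) = max (b - a) 0 := by
  apply lamQ_eq _ (le_max_right _ _)
  rw [rr_interval, Real.volume_Ioo]
  rcases le_or_gt a b with h | h
  · congr 1
    rw [max_eq_left (sub_nonneg.mpr h)]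
    push_cast; ring
  · rw [max_eq_right (sub_nonpos.mpr h.le)]
    rw [ENNReal.ofReal_eq_zero.mpr (by exact_mod_cast sub_nonpos.mpr h.le)]
    norm_num

lemma lamQ_sum (n : ℕ) (a b : Fin n → ℚ) (hab : ∀ i, a i < b i)
    (hadj : ∀ i j : Fin n, (i : ℕ) + 1 = (j : ℕ) → b i ≤ a j)
    (hs : RatOpen (⋃ i, {q : ℚ | a i < q ∧ q < b i})) :
    lamQ _ hs = ∑ i, (b i - a i) := by
  apply lamQ_eq _ (Finset.sum_nonneg fun i _ => sub_nonneg.mpr (hab i).le)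
  rw [rr_finUnion]
  have hdisj : Pairwise (Function.onFun Disjoint (fun i => Ioo (↑(a i) : ℝ) ↑(b i))) := by
    intro i j hne
    have hvne : (i : ℕ) ≠ (j : ℕ) := fun h => hne (Fin.ext h)
    have hd : ∀ i j : Fin n, (i : ℕ) < (j : ℕ) →
        Disjoint (Ioo (↑(a i) : ℝ) ↑(b i)) (Ioo (↑(a j) : ℝ) ↑(b j)) := by
      intro i j hij
      have hba : (b i : ℝ) ≤ (a j : ℝ) := by exact_mod_cast chain_le a b hab hadj i j hij
      rw [Set.disjoint_left]
      rintro x ⟨_, h2⟩ ⟨h3, _⟩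
      linarith
    rcases lt_or_gt_of_ne hvne with h | h
    · exact hd i j h
    · exact (hd j i h).symm
  rw [measure_iUnion hdisj (fun i => measurableSet_Ioo), tsum_fintype]
  have hvol : ∀ i : Fin n, volume (Ioo (↑(a i) : ℝ) ↑(b i)) = ENNReal.ofReal ((b i : ℝ) - a i) :=
    fun i => Real.volume_Ioo
  rw [Finset.sum_congr rfl (fun i _ => hvol i),
      ← ENNReal.ofReal_sum_of_nonneg (fun i _ => by
        have h := (hab i).le
        have : ((a i : ℝ)) ≤ (b i : ℝ) := by exact_mod_cast h
        linarith)]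
  congr 1
  push_cast
  rfl

lemma LCov.ratOpen {s : Set ℚ} {U : Set (Set ℚ)} (h : LCov s U) : RatOpen s := by
  induction h with
  | basic a b => exact RatOpen.interval a b
  | union h1 h2 ih1 ih2 => exact ih1.union ih2

lemma LCov.mem_sub {s : Set ℚ} {U : Set (Set ℚ)} (h : LCov s U) :
    ∀ u ∈ U, RatOpen u ∧ u ⊆ s := by
  induction h with
  | basic a b =>
    rintro u ⟨hu, a', b', ha, hb, hsub⟩
    refine ⟨hu, fun q hq => ?_⟩
    obtain ⟨h1, h2⟩ := hsub hq
    exact ⟨ha.trans h1, h2.trans hb⟩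
  | union h1 h2 ih1 ih2 =>
    rintro w ⟨u, hu, v, hv, rfl⟩
    obtain ⟨hou, hsu⟩ := ih1 u hu
    obtain ⟨hov, hsv⟩ := ih2 v hv
    exact ⟨hou.union hov, union_subset_union hsu hsv⟩

lemma cov_key {s : Set ℚ} {U : Set (Set ℚ)} (h : LCov s U) :
    ∀ (hs : RatOpen s) (q : ℚ), q < lamQ s hs →
      ∃ t, ∃ ht : RatOpen t, t ∈ U ∧ q < lamQ t ht := by
  induction h with
  | basic a b =>
    intro hs q hq
    rw [lamQ_interval] at hq
    rcases lt_or_ge a b with hab | hab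
    · set ε : ℚ := (b - a - q) / 3 with hε
      have hq' : q < b - a := by
        rw [max_eq_left (by linarith : (0:ℚ) ≤ b - a)] at hq; exact hq
      have hε0 : 0 < ε := by rw [hε]; linarith
      refine ⟨{r | a + ε < r ∧ r < b - ε}, RatOpen.interval _ _,
        ⟨RatOpen.interval _ _, a + ε, b - ε, by linarith, by linarith, subset_rfl⟩, ?_⟩
      rw [lamQ_interval]
      refine lt_of_lt_of_le ?_ (le_max_left _ _)
      rw [hε]
      linarith
    · have h0 : max (b - a) 0 = 0 := max_eq_right (by linarith)
      rw [h0] at hq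
      refine ⟨{q | a + 1 < q ∧ q < b - 1}, RatOpen.interval _ _,
        ⟨RatOpen.interval _ _, a + 1, b - 1, by linarith, by linarith, subset_rfl⟩, ?_⟩
      rw [lamQ_interval]
      exact lt_of_lt_of_le hq (le_max_right _ _)
  | union h1 h2 ih1 ih2 =>
    rename_i s t U V
    intro hst q hq
    have hs := h1.ratOpen
    have ht := h2.ratOpen
    set Ls := lamQ s hs
    set Lt := lamQ t ht
    set Li := lamQ (s ∩ t) (hs.inter ht)
    have hmod : lamQ (s ∪ t) (hs.union ht) + Li = Ls + Lt := lamQ_modular hs ht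
    have hst' : lamQ (s ∪ t) hst = lamQ (s ∪ t) (hs.union ht) := rfl
    rw [hst'] at hq
    set d : ℚ := lamQ (s ∪ t) (hs.union ht) - q with hd
    have hd0 : 0 < d := by rw [hd]; linarith
    obtain ⟨u, hu, huU, hqu⟩ := ih1 hs (Ls - d / 2) (by linarith)
    obtain ⟨v, hv, hvV, hqv⟩ := ih2 ht (Lt - d / 2) (by linarith)
    refine ⟨u ∪ v, hu.union hv, ⟨u, huU, v, hvV, rfl⟩, ?_⟩
    have hmod2 : lamQ (u ∪ v) (hu.union hv) + lamQ (u ∩ v) (hu.inter hv)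
        = lamQ u hu + lamQ v hv := lamQ_modular hu hv
    have hsubi : lamQ (u ∩ v) (hu.inter hv) ≤ Li :=
      lamQ_mono _ _ (inter_subset_inter (h1.mem_sub u huU).2 (h2.mem_sub v hvV).2)
    linarith

end LebesgueAux

/-- the Lebesgue pre-valuation `λ'` on `L`, sending a disjoint ordered
union `(a₁,b₁) ∪̇ ⋯ ∪̇ (a_n,b_n)` to `∑ᵢ (bᵢ − aᵢ)`, is well-defined, monotone,
modular, and cover-preserving (for each cover, the supremum of the values of the
covering family in the lower reals dominates the value of the covered element). -/
theorem lebesgue_prevaluation :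
    ∃ lam : {s : Set ℚ // RatOpen s} → ℚ,
      (∀ (n : ℕ) (a b : Fin n → ℚ), (∀ i, a i < b i) →
        (∀ i j : Fin n, (i : ℕ) + 1 = (j : ℕ) → b i ≤ a j) →
          ∀ (s : Set ℚ) (hs : RatOpen s),
            s = ⋃ i, {q | a i < q ∧ q < b i} →
              lam ⟨s, hs⟩ = ∑ i, (b i - a i)) ∧
      (∀ (s t : Set ℚ) (hs : RatOpen s) (ht : RatOpen t),
        s ⊆ t → lam ⟨s, hs⟩ ≤ lam ⟨t, ht⟩) ∧
      (∀ (s t u v : Set ℚ) (hs : RatOpen s) (ht : RatOpen t)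
          (hu : RatOpen u) (hv : RatOpen v),
        u = s ∪ t → v = s ∩ t →
          lam ⟨u, hu⟩ + lam ⟨v, hv⟩ = lam ⟨s, hs⟩ + lam ⟨t, ht⟩) ∧
      (∀ (s : Set ℚ) (hs : RatOpen s) (U : Set (Set ℚ)), LCov s U →
        ∀ x : LowerReal,
          IsLUB {y : LowerReal | ∃ (t : Set ℚ) (ht : RatOpen t),
              t ∈ U ∧ y = ratLR (lam ⟨t, ht⟩)} x →
            ratLR (lam ⟨s, hs⟩) ≤ x) := by
  refine ⟨fun p => lamQ p.1 p.2, ?_, ?_, ?_, ?_⟩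
  · intro n a b hab hadj s hs hseq
    subst hseq
    exact lamQ_sum n a b hab hadj hs
  · intro s t hs ht hsub
    exact lamQ_mono hs ht hsub
  · intro s t u v hs ht hu hv hueq hveq
    subst hueq; subst hveq
    exact lamQ_modular hs ht
  · intro s hs U hcov x hlub q hq
    obtain ⟨t, ht, htU, hqt⟩ := cov_key hcov hs q hq
    exact hlub.1 ⟨t, ht, htU, rfl⟩ q hqt
end
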